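/- arXiv:2603.08699 — 2 statements merged into one kernel-verified Lean document; each statement's English description precedes it below -/
import Mathlib

section
/- Let K be a coquasiintuitionistic algebra, i.e., a bounded distributive lattice with a map • : K → K that is antitone, satisfies x•• ≤ x, and y ≤ x ∨ x• for all x, y. Let K•• = {x•• | x ∈ K} with the inherited order. Then K•• is closed under the join of K, and for α, β ∈ K•• the element (α ∧ β)•• is the greatest lower bound of α and β in K••; moreover 0, 1 ∈ K•• and the restriction of • to K•• is an orthocomplementation, so that K•• with join ∨, meet α ⩓ β := (α ∧ β)••, bounds 0, 1, and negation • is an orthocomplemented lattice. -/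
theorem stmt7 {K : Type*} [DistribLattice K] [BoundedOrder K] (n : K → K)
    (han : Antitone n) (hdn : ∀ x : K, n (n x) ≤ x)
    (hex : ∀ x y : K, y ≤ x ⊔ n x) :
    -- the internal set K•• of double-negation-fixed elements
    let S : Set K := Set.range (fun x => n (n x))
    -- closed under the join of K
    (∀ α ∈ S, ∀ β ∈ S, α ⊔ β ∈ S) ∧
    -- (α ∧ β)•• is the greatest lower bound of α and β in S
    (∀ α ∈ S, ∀ β ∈ S, n (n (α ⊓ β)) ∈ S ∧ n (n (α ⊓ β)) ≤ α ∧ n (n (α ⊓ β)) ≤ β ∧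
      ∀ γ ∈ S, γ ≤ α → γ ≤ β → γ ≤ n (n (α ⊓ β))) ∧
    -- bounds
    ((⊥ : K) ∈ S ∧ (⊤ : K) ∈ S) ∧
    -- the restriction of • is an orthocomplementation
    (∀ α ∈ S, n α ∈ S ∧ n (n α) = α ∧ n (n (α ⊓ n α)) = ⊥ ∧ α ⊔ n α = ⊤) := by
  intro S
  -- triple negation law
  have h3 : ∀ x : K, n (n (n x)) = n x := fun x =>
    le_antisymm (hdn (n x)) (han (hdn x))
  have fix : ∀ α ∈ S, n (n α) = α := by
    rintro α ⟨x, rfl⟩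
    exact h3 (n x)
  have ntop : n ⊤ = ⊥ :=
    le_antisymm ((han le_top).trans (hdn ⊥)) bot_le
  have sup_top : ∀ x : K, x ⊔ n x = ⊤ := fun x => le_antisymm le_top (hex x ⊤)
  refine ⟨?_, ?_, ⟨?_, ?_⟩, ?_⟩
  · rintro α hα β hβ
    refine ⟨α ⊔ β, le_antisymm (hdn _) ?_⟩
    have h1 : α ≤ n (n (α ⊔ β)) := by
      have h := han (han (le_sup_left : α ≤ α ⊔ β))
      rwa [fix α hα] at h
    have h2 : β ≤ n (n (α ⊔ β)) := by
      have h := han (han (le_sup_right : β ≤ α ⊔ β))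
      rwa [fix β hβ] at h
    exact sup_le h1 h2
  · rintro α hα β hβ
    refine ⟨⟨α ⊓ β, rfl⟩, (hdn _).trans inf_le_left, (hdn _).trans inf_le_right,
      ?_⟩
    rintro γ hγ h1 h2
    have h := han (han (le_inf h1 h2))
    rwa [fix γ hγ] at h
  · exact ⟨⊥, le_antisymm (hdn ⊥) bot_le⟩
  · refine ⟨⊤, le_antisymm (hdn ⊤) ?_⟩
    have h := hex (n ⊤) ⊤
    rw [ntop, bot_sup_eq] at h
    show ⊤ ≤ n (n ⊤)
    rw [ntop]; exact h
  · rintro α hα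
    refine ⟨⟨n α, h3 α⟩, fix α hα, ?_, ?_⟩
    · have hz : n (α ⊓ n α) = ⊤ := by
        refine le_antisymm le_top ?_
        calc ⊤ = α ⊔ n α := (sup_top α).symm
        _ = n (n α) ⊔ n α := by rw [fix α hα]
        _ ≤ n (α ⊓ n α) ⊔ n (α ⊓ n α) :=
            sup_le_sup (han inf_le_right) (han inf_le_left)
        _ = n (α ⊓ n α) := sup_idem _
      rw [hz, ntop]
    · exact sup_top α
end

section
/- Let K be a quasiintuitionistic algebra (bounded distributive lattice with antitone ∘, x ≤ x∘∘, x ∧ x∘ ≤ y for all x, y). Then K∘∘ = {x∘∘ | x ∈ K} is closed under the meet of K; for α, β ∈ K∘∘ the element (α ∨ β)∘∘ is the least upper bound of α and β in K∘∘; 0, 1 ∈ K∘∘; and the restriction of ∘ to K∘∘ is an orthocomplementation, so K∘∘ with meet ∧, join α ⩔ β := (α ∨ β)∘∘, bounds 0, 1, and negation ∘ is an orthocomplemented lattice. -/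
theorem stmt18 {K : Type*} [DistribLattice K] [BoundedOrder K] (n : K → K)
    (han : Antitone n) (hdn : ∀ x : K, x ≤ n (n x))
    (hcon : ∀ x y : K, x ⊓ n x ≤ y) :
    let S : Set K := Set.range (fun x => n (n x))
    -- closed under the meet of K
    (∀ α ∈ S, ∀ β ∈ S, α ⊓ β ∈ S) ∧
    -- (α ∨ β)∘∘ is the least upper bound of α and β in S
    (∀ α ∈ S, ∀ β ∈ S, n (n (α ⊔ β)) ∈ S ∧ α ≤ n (n (α ⊔ β)) ∧ β ≤ n (n (α ⊔ β)) ∧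
      ∀ γ ∈ S, α ≤ γ → β ≤ γ → n (n (α ⊔ β)) ≤ γ) ∧
    -- bounds
    ((⊥ : K) ∈ S ∧ (⊤ : K) ∈ S) ∧
    -- the restriction of ∘ is an orthocomplementation
    (∀ α ∈ S, n α ∈ S ∧ n (n α) = α ∧ α ⊓ n α = ⊥ ∧ n (n (α ⊔ n α)) = ⊤) := by
  intro S
  have h3 : ∀ x, n (n (n x)) = n x := fun x => le_antisymm (han (hdn x)) (hdn (n x))
  have fix : ∀ α ∈ S, n (n α) = α := by
    rintro α ⟨x, rfl⟩
    simp only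
    rw [h3]
  have mem_of_fix : ∀ α : K, n (n α) = α → α ∈ S := fun α h => ⟨α, h⟩
  have top_fix : n (n (⊤ : K)) = ⊤ := le_antisymm le_top (hdn ⊤)
  have ntop : n (⊤ : K) = ⊥ := le_antisymm (by simpa using hcon ⊤ ⊥) bot_le
  have nbot : n (⊥ : K) = ⊤ := by
    have : n (n ⊤) ≤ n ⊥ := han bot_le
    rw [top_fix] at this
    exact le_antisymm le_top this
  have bot_fix : n (n (⊥ : K)) = ⊥ := by rw [nbot, ntop]
  refine ⟨?_, ?_, ⟨mem_of_fix ⊥ bot_fix, mem_of_fix ⊤ top_fix⟩, ?_⟩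
  · intro α hα β hβ
    refine mem_of_fix _ (le_antisymm ?_ (hdn _))
    have h1 : n (n (α ⊓ β)) ≤ α := by
      have := han (han (inf_le_left (a := α) (b := β)))
      rwa [fix α hα] at this
    have h2 : n (n (α ⊓ β)) ≤ β := by
      have := han (han (inf_le_right (a := α) (b := β)))
      rwa [fix β hβ] at this
    exact le_inf h1 h2
  · intro α hα β hβ
    refine ⟨⟨α ⊔ β, rfl⟩,
      le_trans le_sup_left (hdn _), le_trans le_sup_right (hdn _), ?_⟩
    intro γ hγ hαγ hβγ
    have := han (han (sup_le hαγ hβγ))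
    rwa [fix γ hγ] at this
  · intro α hα
    refine ⟨mem_of_fix _ (h3 _), fix α hα, le_antisymm (hcon α ⊥) bot_le, ?_⟩
    have hle : n (α ⊔ n α) ≤ α ⊓ n α := by
      refine le_inf ?_ (han le_sup_left)
      have := han (le_sup_right (a := α) (b := n α))
      calc n (α ⊔ n α) ≤ n (n α) := this
        _ = α := fix α hα
    have : n (α ⊔ n α) = ⊥ :=
      le_antisymm (le_trans hle (le_antisymm (hcon α ⊥) bot_le).le) bot_le
    rw [this, nbot]
end
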